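/- (Lemma 2) Suppose each J_i is 1-strongly convex and θ_t ≥ 0. Let Δ̃_t := ⟨q_{t−1}θ_t U_{i_t}A(xᵗ − xᵗ⁻¹), yᵗ⁺¹ − y⟩ − ⟨θ_t Ū_{i_t}Axᵗ, yᵗ − y⟩ + Σ_{i ≠ i_t} θ_t [J_i(y_iᵗ) − J_i(y_i) + (1/2)‖y_i − y_iᵗ⁺¹‖₂²], where yᵗ⁺¹ is the dual update of the RPD algorithm determined by the choice of i_t, with xᵗ, xᵗ⁻¹, yᵗ fixed. If i_t is uniformly distributed on {1, …, p} (so that E_{i_t}[·] is the average over i_t ∈ {1, …, p}), then E_{i_t}[Δ̃_t] ≤ ⟨((1/p)q_{t−1}θ_t − ((p−1)/p)θ_t)Axᵗ − (1/p)q_{t−1}θ_t Axᵗ⁻¹, yᵗ − y⟩ + ((p−1)/p)θ_t[J(yᵗ) − J(y)] + (q_{t−1}²θ_t‖A‖₂²/(2pτ_t))‖xᵗ − xᵗ⁻¹‖₂² + (τ_tθ_t/2)E_{i_t}[‖yᵗ⁺¹ − yᵗ‖₂²] + ((p−1)/(2p))θ_t‖y − yᵗ‖₂². -/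

import Mathlib

open scoped RealInnerProductSpace BigOperators

noncomputable section

abbrev Primal (n : ℕ) := EuclideanSpace ℝ (Fin n)

abbrev DualSp {p : ℕ} (md : Fin p → ℕ) :=
  PiLp 2 (fun i => EuclideanSpace ℝ (Fin (md i)))

/-! Only block `i` of the dual iterate moves when `i` is drawn, so averaging over `i` turns the
sums over the untouched blocks `j ≠ i` into `(p - 1)/p` times full sums at `yᵗ`. The coupling term
with `A (xᵗ - xᵗ⁻¹)` is split off blockwise by Young's inequality
`c ⟪a, b⟫ ≤ c²/(2τ) ‖a‖² + τ/2 ‖b‖²`, and the blocks of `A (xᵗ - xᵗ⁻¹)` then sum up to at most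
`‖A‖² ‖xᵗ - xᵗ⁻¹‖²`. -/

theorem Finset.sum_sum_erase_univ {ι R : Type*} [Fintype ι] [DecidableEq ι] [CommRing R]
    (f : ι → R) :
    ∑ i, ∑ j ∈ Finset.univ.erase i, f j = ((Fintype.card ι : R) - 1) * ∑ j, f j := by
  simp only [Finset.sum_erase_eq_sub (Finset.mem_univ _), Finset.sum_sub_distrib,
    Finset.sum_const, Finset.card_univ, nsmul_eq_mul]
  ring

theorem real_inner_mul_le_young {F : Type*} [NormedAddCommGroup F] [InnerProductSpace ℝ F]
    (a b : F) (c : ℝ) {τ : ℝ} (hτ : 0 < τ) :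
    c * ⟪a, b⟫ ≤ c ^ 2 / (2 * τ) * ‖a‖ ^ 2 + τ / 2 * ‖b‖ ^ 2 := by
  have h := sq_nonneg ‖(c / τ) • a - b‖
  rw [norm_sub_sq_real, norm_smul, real_inner_smul_left, mul_pow, Real.norm_eq_abs, sq_abs] at h
  have key : c ^ 2 / (2 * τ) * ‖a‖ ^ 2 + τ / 2 * ‖b‖ ^ 2 - c * ⟪a, b⟫
      = τ / 2 * ((c / τ) ^ 2 * ‖a‖ ^ 2 - 2 * (c / τ * ⟪a, b⟫) + ‖b‖ ^ 2) := by
    field_simp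
    ring
  nlinarith

namespace PiLp

variable {ι : Type*} [Fintype ι] {E : ι → Type*}

theorem norm_sub_sq_eq_of_forall_ne [∀ i, SeminormedAddCommGroup (E i)] {x y : PiLp 2 E} {i : ι}
    (h : ∀ j, j ≠ i → x j = y j) : ‖x - y‖ ^ 2 = ‖x i - y i‖ ^ 2 := by
  rw [norm_sq_eq_of_L2]
  refine Finset.sum_eq_single i (fun j _ hj => ?_) (by simp)
  simp [h j hj]

theorem sum_sum_erase_eq_of_forall_ne [DecidableEq ι] {R : Type*} [CommRing R]
    (y : PiLp 2 E) (y' : ι → PiLp 2 E) (hy' : ∀ i j, j ≠ i → y' i j = y j)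
    (g : (i : ι) → E i → R) :
    ∑ i, ∑ j ∈ Finset.univ.erase i, g j (y' i j)
      = ((Fintype.card ι : R) - 1) * ∑ j, g j (y j) := by
  rw [← Finset.sum_sum_erase_univ]
  exact Finset.sum_congr rfl fun i _ => Finset.sum_congr rfl fun j hj => by
    rw [hy' i j (Finset.ne_of_mem_erase hj)]

variable [∀ i, NormedAddCommGroup (E i)] [∀ i, InnerProductSpace ℝ (E i)]

theorem sum_inner_block_update_le (a y z : PiLp 2 E) (y' : ι → PiLp 2 E)
    (hy' : ∀ i j, j ≠ i → y' i j = y j) (c : ℝ) {τ : ℝ} (hτ : 0 < τ) :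
    ∑ i, c * ⟪a i, y' i i - z i⟫
      ≤ c * ⟪a, y - z⟫ + c ^ 2 / (2 * τ) * ‖a‖ ^ 2 + τ / 2 * ∑ i, ‖y' i - y‖ ^ 2 := by
  have hblock : ∀ i, c * ⟪a i, y' i i - z i⟫
      ≤ c * ⟪a i, y i - z i⟫ + c ^ 2 / (2 * τ) * ‖a i‖ ^ 2 + τ / 2 * ‖y' i - y‖ ^ 2 := by
    intro i
    have hsplit : ⟪a i, y' i i - z i⟫ = ⟪a i, y' i i - y i⟫ + ⟪a i, y i - z i⟫ := by
      rw [← inner_add_right, sub_add_sub_cancel]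
    rw [hsplit, norm_sub_sq_eq_of_forall_ne (hy' i)]
    linarith [real_inner_mul_le_young (a i) (y' i i - y i) c hτ]
  calc ∑ i, c * ⟪a i, y' i i - z i⟫
      ≤ ∑ i, (c * ⟪a i, y i - z i⟫ + c ^ 2 / (2 * τ) * ‖a i‖ ^ 2 + τ / 2 * ‖y' i - y‖ ^ 2) :=
        Finset.sum_le_sum fun i _ => hblock i
    _ = c * ⟪a, y - z⟫ + c ^ 2 / (2 * τ) * ‖a‖ ^ 2 + τ / 2 * ∑ i, ‖y' i - y‖ ^ 2 := by
        simp only [Finset.sum_add_distrib, ← Finset.mul_sum, PiLp.inner_apply, norm_sq_eq_of_L2]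
        rfl

end PiLp

theorem rpd_lemma2_general
    (n p : ℕ) (hp : 0 < p) (md : Fin p → ℕ)
    (Ys : (i : Fin p) → Set (EuclideanSpace ℝ (Fin (md i))))
    (Js : (i : Fin p) → EuclideanSpace ℝ (Fin (md i)) → ℝ)
    (A : Primal n →L[ℝ] DualSp md)
    (qprev τt : ℝ) (hτt : 0 < τt)
    (xt xtm xbt : Primal n) (yt : DualSp md)
    (ynext : Fin p → DualSp md)
    (hynext : ∀ i : Fin p,
      ynext i i ∈ Ys i ∧
      (∀ u ∈ Ys i,
        -⟪(A xbt) i, ynext i i⟫ + Js i (ynext i i) + τt / 2 * ‖ynext i i - yt i‖ ^ 2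
        ≤ -⟪(A xbt) i, u⟫ + Js i u + τt / 2 * ‖u - yt i‖ ^ 2) ∧
      (∀ j, j ≠ i → ynext i j = yt j))
    (yy : DualSp md)
    (θt : ℝ) (hθt : 0 ≤ θt) :
    (∑ i : Fin p,
        (qprev * θt * ⟪(A (xt - xtm)) i, ynext i i - yy i⟫
          - θt * (∑ j ∈ Finset.univ.erase i, ⟪(A xt) j, yt j - yy j⟫)
          + ∑ j ∈ Finset.univ.erase i,
              θt * (Js j (yt j) - Js j (yy j) + 1 / 2 * ‖yy j - ynext i j‖ ^ 2))) / (p : ℝ)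
      ≤ ⟪(qprev / (p : ℝ) * θt - ((p : ℝ) - 1) / (p : ℝ) * θt) • A xt
            - (qprev / (p : ℝ) * θt) • A xtm, yt - yy⟫
        + ((p : ℝ) - 1) / (p : ℝ) * θt * ((∑ i, Js i (yt i)) - ∑ i, Js i (yy i))
        + qprev ^ 2 * θt * ‖A‖ ^ 2 / (2 * (p : ℝ) * τt) * ‖xt - xtm‖ ^ 2
        + τt * θt / 2 * ((∑ i : Fin p, ‖ynext i - yt‖ ^ 2) / (p : ℝ))
        + ((p : ℝ) - 1) / (2 * (p : ℝ)) * θt * ‖yy - yt‖ ^ 2 := by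
  have hp' : (0 : ℝ) < p := by exact_mod_cast hp
  set v := xt - xtm
  have hoff := PiLp.sum_sum_erase_eq_of_forall_ne yt ynext (fun i => (hynext i).2.2)
    fun j u => θt * (Js j (yt j) - Js j (yy j) + 1 / 2 * ‖yy j - u‖ ^ 2)
  have hinner : ∑ j, ⟪(A xt) j, yt j - yy j⟫ = ⟪A xt, yt - yy⟫ := by
    rw [PiLp.inner_apply]; rfl
  have hnorm : ∑ j, ‖yy j - yt j‖ ^ 2 = ‖yy - yt‖ ^ 2 := by
    rw [PiLp.norm_sq_eq_of_L2]; rfl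
  have hcoupling := mul_le_mul_of_nonneg_left
    (PiLp.sum_inner_block_update_le (A v) yt yy ynext (fun i => (hynext i).2.2) qprev hτt) hθt
  have hAv : θt * (qprev ^ 2 / (2 * τt) * ‖A v‖ ^ 2)
      ≤ θt * (qprev ^ 2 / (2 * τt) * (‖A‖ * ‖v‖) ^ 2) := by
    gcongr
    exact A.le_opNorm v
  rw [div_le_iff₀ hp']
  calc _ = θt * ∑ i, qprev * ⟪(A v) i, ynext i i - yy i⟫ - ((p : ℝ) - 1) * θt * ⟪A xt, yt - yy⟫
        + ((p : ℝ) - 1) * θt * ((∑ i, Js i (yt i)) - ∑ i, Js i (yy i) + 1 / 2 * ‖yy - yt‖ ^ 2) := by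
        rw [Finset.sum_add_distrib, Finset.sum_sub_distrib, hoff]
        simp only [← Finset.mul_sum, Finset.sum_sum_erase_univ, Fintype.card_fin, hinner,
          Finset.sum_add_distrib, Finset.sum_sub_distrib, hnorm]
        ring
    _ ≤ θt * (qprev * ⟪A v, yt - yy⟫ + qprev ^ 2 / (2 * τt) * (‖A‖ * ‖v‖) ^ 2
          + τt / 2 * ∑ i, ‖ynext i - yt‖ ^ 2) - ((p : ℝ) - 1) * θt * ⟪A xt, yt - yy⟫
        + ((p : ℝ) - 1) * θt * ((∑ i, Js i (yt i)) - ∑ i, Js i (yy i) + 1 / 2 * ‖yy - yt‖ ^ 2) := by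
        linarith
    _ = _ := by
        simp only [v, map_sub, inner_sub_left, real_inner_smul_left]
        field_simp
        ring

theorem rpd_lemma2
    (n p : ℕ) (hp : 0 < p) (md : Fin p → ℕ)
    (Ys : (i : Fin p) → Set (EuclideanSpace ℝ (Fin (md i))))
    (hYconv : ∀ i, Convex ℝ (Ys i)) (hYcl : ∀ i, IsClosed (Ys i))
    (Js : (i : Fin p) → EuclideanSpace ℝ (Fin (md i)) → ℝ)
    (hJstrong : ∀ i, StrongConvexOn Set.univ 1 (Js i))
    (A : Primal n →L[ℝ] DualSp md)
    (qprev τt : ℝ) (hτt : 0 < τt)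
    (xt xtm xbt : Primal n) (yt : DualSp md) (hyt : ∀ i, yt i ∈ Ys i)
    (ynext : Fin p → DualSp md)
    (hynext : ∀ i : Fin p,
      ynext i i ∈ Ys i ∧
      (∀ u ∈ Ys i,
        -⟪(A xbt) i, ynext i i⟫ + Js i (ynext i i) + τt / 2 * ‖ynext i i - yt i‖ ^ 2
        ≤ -⟪(A xbt) i, u⟫ + Js i u + τt / 2 * ‖u - yt i‖ ^ 2) ∧
      (∀ j, j ≠ i → ynext i j = yt j))
    (yy : DualSp md) (hyy : ∀ i, yy i ∈ Ys i)
    (θt : ℝ) (hθt : 0 ≤ θt) :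
    (∑ i : Fin p,
        (qprev * θt * ⟪(A (xt - xtm)) i, ynext i i - yy i⟫
          - θt * (∑ j ∈ Finset.univ.erase i, ⟪(A xt) j, yt j - yy j⟫)
          + ∑ j ∈ Finset.univ.erase i,
              θt * (Js j (yt j) - Js j (yy j) + 1 / 2 * ‖yy j - ynext i j‖ ^ 2))) / (p : ℝ)
      ≤ ⟪(qprev / (p : ℝ) * θt - ((p : ℝ) - 1) / (p : ℝ) * θt) • A xt
            - (qprev / (p : ℝ) * θt) • A xtm, yt - yy⟫
        + ((p : ℝ) - 1) / (p : ℝ) * θt * ((∑ i, Js i (yt i)) - ∑ i, Js i (yy i))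
        + qprev ^ 2 * θt * ‖A‖ ^ 2 / (2 * (p : ℝ) * τt) * ‖xt - xtm‖ ^ 2
        + τt * θt / 2 * ((∑ i : Fin p, ‖ynext i - yt‖ ^ 2) / (p : ℝ))
        + ((p : ℝ) - 1) / (2 * (p : ℝ)) * θt * ‖yy - yt‖ ^ 2 :=
  rpd_lemma2_general n p hp md Ys Js A qprev τt hτt xt xtm xbt yt ynext hynext yy θt hθt
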